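/- (Theorem 4, equivalence of perfect learners) Let p be an absolutely continuous probability density on ℝ^K supported inside the hypercube [−U, U]^K. Let the target f : ℝ^K → ℝ be smooth with |∂^α f(y)| ≤ B^{|α|} H for every multi-index α and every y ∈ ℝ^K. For each N, let X_1,…,X_N be i.i.d. random vectors with density p, and let f̂_{1,N} and f̂_{2,N} be two (random) models, smooth with |∂^α f̂_{j,N}(y)| ≤ (B_j')^{|α|} H for every α and y (j = 1, 2, with fixed B_1', B_2' > 0), both achieving zero empirical risk: f̂_{j,N}(X_i) = f(X_i) for all i = 1,…,N and j = 1,2. Then ∫_{ℝ^K} |f̂_{1,N}(x) − f̂_{2,N}(x)|² p(x) dx converges to 0 in probability as N → ∞, i.e., the two learned models are asymptotically identical under p. -/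

import Mathlib

open MeasureTheory

/-- Single partial derivative in coordinate direction `k`. -/
noncomputable def pderiv1 {K : ℕ} (k : Fin K) (f : (Fin K → ℝ) → ℝ) : (Fin K → ℝ) → ℝ :=
  fun x => fderiv ℝ f x (Pi.single k 1)

/-- Mixed partial derivative `∂^α f` for a multi-index `α : Fin K → ℕ`. -/
noncomputable def mpderiv {K : ℕ} (α : Fin K → ℕ) (f : (Fin K → ℝ) → ℝ) :
    (Fin K → ℝ) → ℝ :=
  (List.finRange K).foldr (fun k g => (pderiv1 k)^[α k] g) f

section Aux

lemma foldr_zero {K : ℕ} (α : Fin K → ℕ) (f : (Fin K → ℝ) → ℝ) (l : List (Fin K))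
    (h : ∀ j ∈ l, α j = 0) :
    l.foldr (fun k g => (pderiv1 k)^[α k] g) f = f := by
  induction l with
  | nil => rfl
  | cons a t ih =>
      simp only [List.foldr_cons, ih (fun j hj => h j (List.mem_cons_of_mem a hj)),
        h a List.mem_cons_self, Function.iterate_zero, id]

lemma mpderiv_zero {K : ℕ} (f : (Fin K → ℝ) → ℝ) : mpderiv (fun _ => 0) f = f :=
  foldr_zero _ f _ (fun _ _ => rfl)

lemma foldr_single {K : ℕ} (k : Fin K) (f : (Fin K → ℝ) → ℝ) (l : List (Fin K))
    (hk : k ∈ l) (hl : l.Nodup) :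
    l.foldr (fun j g => (pderiv1 j)^[(Pi.single k 1 : Fin K → ℕ) j] g) f = pderiv1 k f := by
  induction l with
  | nil => simp at hk
  | cons a t ih =>
      rcases List.mem_cons.1 hk with h | h
      · subst h
        have hkt : k ∉ t := (List.nodup_cons.1 hl).1
        simp only [List.foldr_cons]
        rw [foldr_zero _ f t (fun j hj => Pi.single_eq_of_ne (by rintro rfl; exact hkt hj) 1)]
        simp [Pi.single_eq_same]
      · have hak : a ≠ k := by rintro rfl; exact (List.nodup_cons.1 hl).1 h
        simp only [List.foldr_cons, ih h (List.nodup_cons.1 hl).2,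
          Pi.single_eq_of_ne hak, Function.iterate_zero, id]

lemma mpderiv_single {K : ℕ} (k : Fin K) (f : (Fin K → ℝ) → ℝ) :
    mpderiv (Pi.single k 1) f = pderiv1 k f :=
  foldr_single k f _ (List.mem_finRange k) (List.nodup_finRange K)

lemma sum_single_one {K : ℕ} (k : Fin K) : (∑ j, (Pi.single k 1 : Fin K → ℕ) j) = 1 := by
  simp [Finset.sum_pi_single]

lemma abs_le_H {K : ℕ} {C H : ℝ} (f : (Fin K → ℝ) → ℝ)
    (hfB : ∀ (α : Fin K → ℕ) (y : Fin K → ℝ), |mpderiv α f y| ≤ C ^ (∑ k, α k) * H)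
    (y : Fin K → ℝ) : |f y| ≤ H := by
  have := hfB (fun _ => 0) y
  simpa [mpderiv_zero] using this

lemma pderiv1_le {K : ℕ} {C H : ℝ} (f : (Fin K → ℝ) → ℝ)
    (hfB : ∀ (α : Fin K → ℕ) (y : Fin K → ℝ), |mpderiv α f y| ≤ C ^ (∑ k, α k) * H)
    (k : Fin K) (y : Fin K → ℝ) : |pderiv1 k f y| ≤ C * H := by
  have := hfB (Pi.single k 1) y
  rwa [mpderiv_single, sum_single_one, pow_one] at this

lemma norm_fderiv_le {K : ℕ} {C H : ℝ} (hC : 0 < C) (hH : 0 < H)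
    (f : (Fin K → ℝ) → ℝ)
    (hfB : ∀ (α : Fin K → ℕ) (y : Fin K → ℝ), |mpderiv α f y| ≤ C ^ (∑ k, α k) * H)
    (x : Fin K → ℝ) : ‖fderiv ℝ f x‖ ≤ K * (C * H) := by
  apply ContinuousLinearMap.opNorm_le_bound _ (by positivity)
  intro v
  have hv : v = ∑ k, v k • (Pi.single k 1 : Fin K → ℝ) := by
    ext j
    simp [Pi.single_apply, Finset.sum_ite_eq]
  calc ‖fderiv ℝ f x v‖ = ‖∑ k, v k * pderiv1 k f x‖ := by
        conv_lhs => rw [hv]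
        simp [map_sum, _root_.map_smul, pderiv1]
    _ ≤ ∑ k, ‖v k * pderiv1 k f x‖ := norm_sum_le _ _
    _ ≤ ∑ k : Fin K, ‖v‖ * (C * H) := by
        apply Finset.sum_le_sum
        intro k _
        rw [norm_mul]
        exact mul_le_mul (norm_le_pi_norm v k)
          (by simpa [Real.norm_eq_abs] using pderiv1_le f hfB k x)
          (norm_nonneg _) (norm_nonneg _)
    _ = K * (C * H) * ‖v‖ := by
        simp [Finset.sum_const, Finset.card_univ]
        ring

lemma diff_lipschitz {K : ℕ} {C₁ C₂ H : ℝ} (hC₁ : 0 < C₁) (hC₂ : 0 < C₂) (hH : 0 < H)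
    (g₁ g₂ : (Fin K → ℝ) → ℝ) (hg₁ : ContDiff ℝ (⊤ : ℕ∞) g₁) (hg₂ : ContDiff ℝ (⊤ : ℕ∞) g₂)
    (hB₁ : ∀ (α : Fin K → ℕ) (y : Fin K → ℝ), |mpderiv α g₁ y| ≤ C₁ ^ (∑ k, α k) * H)
    (hB₂ : ∀ (α : Fin K → ℕ) (y : Fin K → ℝ), |mpderiv α g₂ y| ≤ C₂ ^ (∑ k, α k) * H)
    (a x : Fin K → ℝ) (hga : g₁ a = g₂ a) :
    |g₁ x - g₂ x| ≤ (K * (C₁ * H) + K * (C₂ * H)) * dist x a := by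
  set g : (Fin K → ℝ) → ℝ := fun y => g₁ y - g₂ y with hg
  have hd₁ : Differentiable ℝ g₁ := hg₁.differentiable (by simp)
  have hd₂ : Differentiable ℝ g₂ := hg₂.differentiable (by simp)
  have hdg : ∀ y, DifferentiableAt ℝ g y := fun y => (hd₁ y).sub (hd₂ y)
  have hbound : ∀ y, ‖fderiv ℝ g y‖ ≤ K * (C₁ * H) + K * (C₂ * H) := by
    intro y
    rw [hg, fderiv_fun_sub (hd₁ y) (hd₂ y)]
    exact (norm_sub_le _ _).trans
      (add_le_add (norm_fderiv_le hC₁ hH g₁ hB₁ y) (norm_fderiv_le hC₂ hH g₂ hB₂ y))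
  have key := Convex.norm_image_sub_le_of_norm_fderiv_le
    (f := g) (C := K * (C₁ * H) + K * (C₂ * H)) (s := Set.univ)
    (fun y _ => hdg y) (fun y _ => hbound y) convex_univ (Set.mem_univ a) (Set.mem_univ x)
  have hga0 : g₁ a - g₂ a = 0 := by simp [hga]
  rw [dist_eq_norm]
  simpa [hg, hga0, Real.norm_eq_abs] using key

open Filter in
lemma prob_tendsto {K : ℕ} (p : (Fin K → ℝ) → ℝ)
    (hp_nonneg : ∀ x, 0 ≤ p x) (hp_one : ∫ x : Fin K → ℝ, p x = 1)
    (r : ℝ) (hr : 0 < r) (c : ENNReal) (hc0 : c ≠ 0) (hctop : c ≠ ⊤) :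
    Tendsto (fun N : ℕ =>
        (Measure.pi fun _ : Fin N => volume.withDensity fun x => ENNReal.ofReal (p x))
          {xs : Fin N → Fin K → ℝ |
            c ≤ (volume.withDensity fun x => ENNReal.ofReal (p x))
                  {x | ∀ i, r ≤ dist x (xs i)}})
      atTop (nhds 0) := by
  set μ : Measure (Fin K → ℝ) := volume.withDensity fun x => ENNReal.ofReal (p x) with hμ
  have hp_int : Integrable p := by
    by_contra h
    rw [integral_undef h] at hp_one
    exact one_ne_zero hp_one.symm
  have hμuniv : μ Set.univ = 1 := by
    rw [hμ, withDensity_apply _ MeasurableSet.univ, Measure.restrict_univ,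
      ← ofReal_integral_eq_lintegral_ofReal hp_int (ae_of_all _ hp_nonneg), hp_one,
      ENNReal.ofReal_one]
  haveI hprob : IsProbabilityMeasure μ := ⟨hμuniv⟩
  have hs' : MeasurableSet {q : (Fin K → ℝ) × (Fin K → ℝ) | r ≤ dist q.1 q.2} :=
    (isClosed_le continuous_const continuous_dist).measurableSet
  set φ : (Fin K → ℝ) → ENNReal := fun x => μ {y | r ≤ dist x y} with hφ
  have hφ_meas : Measurable φ := by
    have := measurable_measure_prodMk_left (ν := μ) hs'
    convert this using 2
    rfl
  have hφ_le_one : ∀ x, φ x ≤ 1 := fun x => prob_le_one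
  have hae : ∀ᵐ x ∂μ, φ x < 1 := by
    have hZ : μ {x | μ (Metric.ball x r) = 0} = 0 := by
      apply MeasureTheory.measure_null_of_locally_null
      intro x hx
      exact ⟨Metric.ball x r, nhdsWithin_le_nhds (Metric.ball_mem_nhds x hr), hx⟩
    filter_upwards [compl_mem_ae_iff.2 hZ] with x hx
    simp only [Set.mem_compl_iff, Set.mem_setOf_eq] at hx
    have hset : {y | r ≤ dist x y} = (Metric.ball x r)ᶜ := by
      ext y; simp [Metric.mem_ball, dist_comm, not_lt]
    rw [hφ]
    simp only [hset]
    rw [measure_compl measurableSet_ball (measure_ne_top μ _), hμuniv]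
    exact ENNReal.sub_lt_self ENNReal.one_ne_top one_ne_zero hx
  have hDCT : Tendsto (fun N => ∫⁻ x, φ x ^ N ∂μ) atTop (nhds 0) := by
    have h0 : (0 : ENNReal) = ∫⁻ _ : Fin K → ℝ, 0 ∂μ := by simp
    rw [h0]
    apply tendsto_lintegral_of_dominated_convergence (bound := fun _ => 1)
    · exact fun n => hφ_meas.pow_const n
    · exact fun n => ae_of_all _ fun x => pow_le_one' (hφ_le_one x) n
    · simp [hμuniv]
    · filter_upwards [hae] with x hx
      exact ENNReal.tendsto_pow_atTop_nhds_zero_of_lt_one hx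
  have hbound : ∀ N : ℕ,
      (Measure.pi fun _ : Fin N => μ)
        {xs : Fin N → Fin K → ℝ | c ≤ μ {x | ∀ i, r ≤ dist x (xs i)}}
      ≤ (∫⁻ x, φ x ^ N ∂μ) / c := by
    intro N
    set μN : Measure (Fin N → Fin K → ℝ) := Measure.pi fun _ => μ with hμN
    haveI : IsProbabilityMeasure μN := by
      rw [hμN]; infer_instance
    set s : Set ((Fin N → Fin K → ℝ) × (Fin K → ℝ)) :=
      {q | ∀ i, r ≤ dist q.2 (q.1 i)} with hsdef
    have hs : MeasurableSet s := by
      have : IsClosed s := by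
        have : s = ⋂ i, {q : (Fin N → Fin K → ℝ) × (Fin K → ℝ) | r ≤ dist q.2 (q.1 i)} := by
          ext q; simp [hsdef]
        rw [this]
        exact isClosed_iInter fun i =>
          isClosed_le continuous_const
            (continuous_snd.dist ((continuous_apply i).comp continuous_fst))
      exact this.measurableSet
    have hM_meas : Measurable fun xs : Fin N → Fin K → ℝ =>
        μ {x | ∀ i, r ≤ dist x (xs i)} := by
      have := measurable_measure_prodMk_left (ν := μ) hs
      convert this using 2
      rfl
    have markov := meas_ge_le_lintegral_div (μ := μN) hM_meas.aemeasurable hc0 hctop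
    refine markov.trans ?_
    apply ENNReal.div_le_div_right
    have step1 : ∫⁻ xs, μ {x | ∀ i, r ≤ dist x (xs i)} ∂μN
        = ∫⁻ xs, ∫⁻ x, s.indicator 1 (xs, x) ∂μ ∂μN := by
      apply lintegral_congr
      intro xs
      have : (Prod.mk xs ⁻¹' s) = {x | ∀ i, r ≤ dist x (xs i)} := rfl
      rw [← this, ← lintegral_indicator_one (measurable_prodMk_left hs)]
      rfl
    have step2 : ∫⁻ xs, ∫⁻ x, s.indicator 1 (xs, x) ∂μ ∂μN
        = ∫⁻ x, ∫⁻ xs, s.indicator 1 (xs, x) ∂μN ∂μ := by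
      apply lintegral_lintegral_swap
      exact ((measurable_one.indicator hs).aemeasurable)
    have step3 : ∀ x : Fin K → ℝ, ∫⁻ xs, s.indicator 1 (xs, x) ∂μN = φ x ^ N := by
      intro x
      have hpre : ((fun xs : Fin N → Fin K → ℝ => (xs, x)) ⁻¹' s)
          = Set.univ.pi (fun _ : Fin N => {y | r ≤ dist x y}) := by
        ext xs; simp [hsdef, dist_comm, Set.mem_pi]
      have hmeas2 : MeasurableSet ((fun xs : Fin N → Fin K → ℝ => (xs, x)) ⁻¹' s) :=
        hs.preimage (measurable_id.prodMk measurable_const)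
      calc ∫⁻ xs, s.indicator 1 (xs, x) ∂μN
          = μN ((fun xs => (xs, x)) ⁻¹' s) := by
            rw [← lintegral_indicator_one hmeas2]; rfl
        _ = ∏ _i : Fin N, μ {y | r ≤ dist x y} := by
            rw [hpre, hμN, Measure.pi_pi]
        _ = φ x ^ N := by simp [hφ]
    rw [step1, step2]
    exact le_of_eq (lintegral_congr step3)
  have hlim : Tendsto (fun N => (∫⁻ x, φ x ^ N ∂μ) / c) atTop (nhds 0) := by
    have := ENNReal.Tendsto.div_const hDCT (Or.inr hc0)
    simpa using this
  exact tendsto_of_tendsto_of_tendsto_of_le_of_le tendsto_const_nhds hlim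
    (fun N => zero_le) hbound

end Aux

/-- **Theorem 4 (equivalence of perfect learners).**  Let `p` be a probability density
supported inside `[−U, U]^K` and let the target `f` be smooth and bandlimited by `B`
with height `H`.  For each `N`, let `f̂_{1,N}` and `f̂_{2,N}` be two models, depending
on the i.i.d. samples `X_1, …, X_N ∼ p`, that are smooth and bandlimited by `B_1'`
resp. `B_2'` with height `H`, both achieving zero empirical risk.  Then
`∫ |f̂_{1,N}(x) − f̂_{2,N}(x)|² p(x) dx → 0` in probability as `N → ∞`:
the two learned models are asymptotically identical under `p`. -/
theorem perfect_learners_equivalence {K : ℕ} (U B B₁' B₂' H : ℝ)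
    (hU : 0 < U) (hB : 0 < B) (hB₁' : 0 < B₁') (hB₂' : 0 < B₂') (hH : 0 < H)
    (p : (Fin K → ℝ) → ℝ) (hp_meas : Measurable p) (hp_nonneg : ∀ x, 0 ≤ p x)
    (hp_one : ∫ x : Fin K → ℝ, p x = 1)
    (hp_supp : ∀ x : Fin K → ℝ, (∃ k, U < |x k|) → p x = 0)
    (f : (Fin K → ℝ) → ℝ) (hf : ContDiff ℝ (⊤ : ℕ∞) f)
    (hfB : ∀ (α : Fin K → ℕ) (y : Fin K → ℝ),
      |mpderiv α f y| ≤ B ^ (∑ k, α k) * H)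
    (fhat₁ fhat₂ : (N : ℕ) → (Fin N → (Fin K → ℝ)) → ((Fin K → ℝ) → ℝ))
    (hfhat₁_smooth : ∀ (N : ℕ) (xs : Fin N → Fin K → ℝ), ContDiff ℝ (⊤ : ℕ∞) (fhat₁ N xs))
    (hfhat₂_smooth : ∀ (N : ℕ) (xs : Fin N → Fin K → ℝ), ContDiff ℝ (⊤ : ℕ∞) (fhat₂ N xs))
    (hfhat₁B : ∀ (N : ℕ) (xs : Fin N → Fin K → ℝ) (α : Fin K → ℕ) (y : Fin K → ℝ),
      |mpderiv α (fhat₁ N xs) y| ≤ B₁' ^ (∑ k, α k) * H)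
    (hfhat₂B : ∀ (N : ℕ) (xs : Fin N → Fin K → ℝ) (α : Fin K → ℕ) (y : Fin K → ℝ),
      |mpderiv α (fhat₂ N xs) y| ≤ B₂' ^ (∑ k, α k) * H)
    (hinterp₁ : ∀ (N : ℕ) (xs : Fin N → Fin K → ℝ) (i : Fin N),
      fhat₁ N xs (xs i) = f (xs i))
    (hinterp₂ : ∀ (N : ℕ) (xs : Fin N → Fin K → ℝ) (i : Fin N),
      fhat₂ N xs (xs i) = f (xs i)) :
    ∀ δ : ℝ, 0 < δ →
      Filter.Tendsto
        (fun N : ℕ =>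
          (Measure.pi fun _ : Fin N =>
              volume.withDensity fun x => ENNReal.ofReal (p x))
            {xs : Fin N → Fin K → ℝ |
              δ < ∫ x : Fin K → ℝ, (fhat₁ N xs x - fhat₂ N xs x) ^ 2 * p x})
        Filter.atTop (nhds 0) := by
  intro δ hδ
  have hp_int : Integrable p := by
    by_contra h
    rw [integral_undef h] at hp_one
    exact one_ne_zero hp_one.symm
  set L : ℝ := K * (B₁' * H) + K * (B₂' * H) with hL
  have hL0 : 0 ≤ L := by positivity
  set r : ℝ := Real.sqrt (δ / 2) / (L + 1) with hrdef
  have hrpos : 0 < r := div_pos (Real.sqrt_pos.2 (by linarith)) (by linarith)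
  have hLr : (L * r) ^ 2 ≤ δ / 2 := by
    have h1 : L * r ≤ Real.sqrt (δ / 2) := by
      rw [hrdef]
      calc L * (Real.sqrt (δ / 2) / (L + 1))
          = Real.sqrt (δ / 2) * (L / (L + 1)) := by ring
        _ ≤ Real.sqrt (δ / 2) * 1 :=
            mul_le_mul_of_nonneg_left
              (div_le_one_of_le₀ (by linarith) (by linarith)) (Real.sqrt_nonneg _)
        _ = Real.sqrt (δ / 2) := mul_one _
    have h2 : 0 ≤ L * r := mul_nonneg hL0 hrpos.le
    calc (L * r) ^ 2 ≤ (Real.sqrt (δ / 2)) ^ 2 := pow_le_pow_left₀ h2 h1 2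
      _ = δ / 2 := Real.sq_sqrt (by linarith)
  set ε : ℝ := δ / (2 * (2 * H) ^ 2) with hεdef
  have hεpos : 0 < ε := by positivity
  -- deterministic inclusion
  have hincl : ∀ (N : ℕ) (xs : Fin N → Fin K → ℝ),
      δ < ∫ x : Fin K → ℝ, (fhat₁ N xs x - fhat₂ N xs x) ^ 2 * p x →
      ENNReal.ofReal ε ≤ (volume.withDensity fun x => ENNReal.ofReal (p x))
        {x | ∀ i, r ≤ dist x (xs i)} := by
    intro N xs hδI
    set g₁ := fhat₁ N xs with hg₁
    set g₂ := fhat₂ N xs with hg₂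
    set g : (Fin K → ℝ) → ℝ := fun x => g₁ x - g₂ x with hg
    set Sset : Set (Fin K → ℝ) := {x | ∀ i, r ≤ dist x (xs i)} with hSdef
    have hSmeas : MeasurableSet Sset := by
      have : IsClosed Sset := by
        have : Sset = ⋂ i, {x : Fin K → ℝ | r ≤ dist x (xs i)} := by
          ext x; simp [hSdef]
        rw [this]
        exact isClosed_iInter fun i =>
          isClosed_le continuous_const (continuous_id.dist continuous_const)
      exact this.measurableSet
    have hg2H : ∀ x, |g x| ≤ 2 * H := by
      intro x
      have h1 := abs_le_H g₁ (hfhat₁B N xs) x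
      have h2 := abs_le_H g₂ (hfhat₂B N xs) x
      calc |g x| = |g₁ x - g₂ x| := rfl
        _ ≤ |g₁ x| + |g₂ x| := abs_sub _ _
        _ ≤ 2 * H := by linarith
    have hg_far : ∀ x ∉ Sset, |g x| ≤ L * r := by
      intro x hx
      simp only [hSdef, Set.mem_setOf_eq, not_forall, not_le] at hx
      obtain ⟨i, hi⟩ := hx
      have := diff_lipschitz hB₁' hB₂' hH g₁ g₂ (hfhat₁_smooth N xs) (hfhat₂_smooth N xs)
        (hfhat₁B N xs) (hfhat₂B N xs) (xs i) x
        (by rw [hg₁, hg₂, hinterp₁ N xs i, hinterp₂ N xs i])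
      calc |g x| ≤ L * dist x (xs i) := this
        _ ≤ L * r := mul_le_mul_of_nonneg_left hi.le hL0
    have hpt : ∀ x, (g x) ^ 2 * p x ≤ δ / 2 * p x + (2 * H) ^ 2 * Sset.indicator p x := by
      intro x
      by_cases hx : x ∈ Sset
      · rw [Set.indicator_of_mem hx]
        have h1 : (g x) ^ 2 ≤ (2 * H) ^ 2 := by
          have := hg2H x
          nlinarith [abs_nonneg (g x), sq_abs (g x)]
        calc (g x) ^ 2 * p x ≤ (2 * H) ^ 2 * p x :=
              mul_le_mul_of_nonneg_right h1 (hp_nonneg x)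
          _ ≤ δ / 2 * p x + (2 * H) ^ 2 * p x :=
              le_add_of_nonneg_left (mul_nonneg (le_of_lt (half_pos hδ)) (hp_nonneg x))
      · rw [Set.indicator_of_notMem hx]
        have h1 : (g x) ^ 2 ≤ (L * r) ^ 2 := by
          have := hg_far x hx
          nlinarith [abs_nonneg (g x), sq_abs (g x)]
        have h2 : (g x) ^ 2 ≤ δ / 2 := h1.trans hLr
        rw [mul_zero, add_zero]
        exact mul_le_mul_of_nonneg_right h2 (hp_nonneg x)
    have hg_cont : Continuous g :=
      ((hfhat₁_smooth N xs).continuous).sub ((hfhat₂_smooth N xs).continuous)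
    have h_int_lhs : Integrable (fun x => (g x) ^ 2 * p x) := by
      apply Integrable.mono' (hp_int.const_mul ((2 * H) ^ 2))
      · exact (((hg_cont.pow 2).measurable).mul hp_meas).aestronglyMeasurable
      · refine ae_of_all _ fun x => ?_
        rw [Real.norm_eq_abs, abs_of_nonneg (mul_nonneg (sq_nonneg _) (hp_nonneg x))]
        have h1 : (g x) ^ 2 ≤ (2 * H) ^ 2 := by
          have := hg2H x
          nlinarith [abs_nonneg (g x), sq_abs (g x)]
        exact mul_le_mul_of_nonneg_right h1 (hp_nonneg x)
    have h_int_ind : Integrable (Sset.indicator p) := hp_int.indicator hSmeas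
    have h_int_r1 : Integrable (fun x => δ / 2 * p x) := hp_int.const_mul _
    have h_int_r2 : Integrable (fun x => (2 * H) ^ 2 * Sset.indicator p x) :=
      h_int_ind.const_mul _
    set t : ℝ := ∫ x, Sset.indicator p x with ht
    have hI : (∫ x : Fin K → ℝ, (g x) ^ 2 * p x) ≤ δ / 2 + (2 * H) ^ 2 * t := by
      calc (∫ x : Fin K → ℝ, (g x) ^ 2 * p x)
          ≤ ∫ x, (δ / 2 * p x + (2 * H) ^ 2 * Sset.indicator p x) :=
            integral_mono h_int_lhs (h_int_r1.add h_int_r2) hpt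
        _ = δ / 2 * (∫ x, p x) + (2 * H) ^ 2 * t := by
            rw [integral_add h_int_r1 h_int_r2, integral_const_mul, integral_const_mul]
        _ = δ / 2 + (2 * H) ^ 2 * t := by rw [hp_one]; ring
    have hεt : ε ≤ t := by
      have : δ < δ / 2 + (2 * H) ^ 2 * t := lt_of_lt_of_le hδI hI
      rw [hεdef, div_le_iff₀ (by positivity : (0:ℝ) < 2 * (2 * H) ^ 2)]
      linarith
    have hμS : (volume.withDensity fun x => ENNReal.ofReal (p x)) Sset
        = ENNReal.ofReal t := by
      rw [withDensity_apply _ hSmeas,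
        ← lintegral_indicator (f := fun x => ENNReal.ofReal (p x)) hSmeas]
      have hind : ∀ x, Sset.indicator (fun x => ENNReal.ofReal (p x)) x
          = ENNReal.ofReal (Sset.indicator p x) := by
        intro x; by_cases hx : x ∈ Sset <;> simp [Set.indicator, hx]
      rw [lintegral_congr hind,
        ← ofReal_integral_eq_lintegral_ofReal h_int_ind
          (ae_of_all _ fun x => Set.indicator_nonneg (fun y _ => hp_nonneg y) x)]
    rw [hμS]
    exact ENNReal.ofReal_le_ofReal hεt
  exact tendsto_of_tendsto_of_tendsto_of_le_of_le tendsto_const_nhds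
    (prob_tendsto p hp_nonneg hp_one r hrpos (ENNReal.ofReal ε)
      (ENNReal.ofReal_pos.2 hεpos).ne' ENNReal.ofReal_ne_top)
    (fun N => zero_le)
    (fun N => measure_mono fun xs hxs => hincl N xs hxs)
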